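/- Suppose L₀ is a global minimizer of the Lennard-Jones energy E_LJ among all Bravais lattices of ℝ². Then ζ_{L₀}(12) ≤ ζ_{L₀}(6), and for every Bravais lattice L of ℝ² with ζ_L(12) ≤ ζ_L(6) one has ζ_L(6) ≤ ζ_{L₀}(6); that is, ζ_{L₀}(6) = max{ ζ_L(6) : L a Bravais lattice with ζ_L(12) ≤ ζ_L(6) }. -/
import Mathlib


noncomputable section
open Real

abbrev R2 := EuclideanSpace ℝ (Fin 2)

def vec2 (x y : ℝ) : R2 := (WithLp.equiv 2 (Fin 2 → ℝ)).symm ![x, y]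

/-- `L` is the Bravais lattice generated by the basis `(u, v)` of `ℝ²`. -/
def LatticeBasis (L : Set R2) (u v : R2) : Prop :=
  LinearIndependent ℝ ![u, v] ∧
    L = {x : R2 | ∃ m n : ℤ, x = (m : ℝ) • u + (n : ℝ) • v}

/-- `L` is a Bravais lattice of `ℝ²`. -/
def IsBravais (L : Set R2) : Prop := ∃ u v : R2, LatticeBasis L u v

/-- The area `|L| = ‖u‖‖v‖|sin θ|` of a Bravais lattice. -/
def HasArea (L : Set R2) (A : ℝ) : Prop :=
  ∃ u v : R2, LatticeBasis L u v ∧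
    ‖u‖ * ‖v‖ * |Real.sin (InnerProductGeometry.angle u v)| = A

/-- The Lennard-Jones potential. -/
def VLJ (r : ℝ) : ℝ := r ^ (-12 : ℤ) - 2 * r ^ (-6 : ℤ)

/-- The Lennard-Jones energy of a lattice. -/
def ELJ (L : Set R2) : ℝ := ∑' x : {x : R2 // x ∈ L ∧ x ≠ 0}, VLJ ‖(x : R2)‖

/-- The Epstein zeta function of a lattice. -/
def zetaL (L : Set R2) (s : ℝ) : ℝ := ∑' x : {x : R2 // x ∈ L ∧ x ≠ 0}, ‖(x : R2)‖ ^ (-s)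

/-- The theta function of a lattice. -/
def thetaL (L : Set R2) (α : ℝ) : ℝ := ∑' x : L, Real.exp (-2 * π * α * ‖(x : R2)‖ ^ 2)

/-- The triangular lattice of area `A`. -/
def triLattice (A : ℝ) : Set R2 :=
  {x : R2 | ∃ m n : ℤ, x =
      (m : ℝ) • (Real.sqrt (2 * A / Real.sqrt 3) • vec2 1 0) +
      (n : ℝ) • (Real.sqrt (2 * A / Real.sqrt 3) • vec2 (1/2) (Real.sqrt 3 / 2))}

/-- `L` is the image of `M` under a linear isometry of `ℝ²`. -/
def IsRotationOf (L M : Set R2) : Prop := ∃ f : R2 ≃ₗᵢ[ℝ] R2, L = f '' M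

open Pointwise

lemma zetaL_nonneg (L : Set R2) (s : ℝ) : 0 ≤ zetaL L s :=
  tsum_nonneg fun x => Real.rpow_nonneg (norm_nonneg _) _

lemma isBravais_smul {L : Set R2} {c : ℝ} (hc : 0 < c) (h : IsBravais L) :
    IsBravais (c • L) := by
  obtain ⟨u, v, hli, hL⟩ := h
  refine ⟨c • u, c • v, ?_, ?_⟩
  · rw [linearIndependent_fin2] at hli ⊢
    refine ⟨smul_ne_zero hc.ne' hli.1, fun a hav => hli.2 a ?_⟩
    have : c • (a • v) = c • u := by rw [smul_comm]; exact hav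
    exact smul_right_injective R2 hc.ne' this
  · ext x
    simp only [Set.mem_smul_set, hL, Set.mem_setOf_eq]
    constructor
    · rintro ⟨y, ⟨m, n, rfl⟩, rfl⟩
      exact ⟨m, n, by rw [smul_add, smul_comm c, smul_comm c]⟩
    · rintro ⟨m, n, rfl⟩
      exact ⟨(m : ℝ) • u + (n : ℝ) • v, ⟨m, n, rfl⟩,
        by rw [smul_add, smul_comm c, smul_comm c]⟩

lemma zetaL_smul (L : Set R2) {c : ℝ} (hc : 0 < c) (s : ℝ) :
    zetaL (c • L) s = c ^ (-s) * zetaL L s := by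
  let e : {x : R2 // x ∈ L ∧ x ≠ 0} ≃ {x : R2 // x ∈ c • L ∧ x ≠ 0} :=
    { toFun := fun x => ⟨c • x.1, Set.smul_mem_smul_set x.2.1,
        smul_ne_zero hc.ne' x.2.2⟩
      invFun := fun x => ⟨c⁻¹ • x.1, by
        obtain ⟨y, hy, hyx⟩ := x.2.1
        refine ⟨?_, smul_ne_zero (inv_ne_zero hc.ne') x.2.2⟩
        rw [← hyx, inv_smul_smul₀ hc.ne']; exact hy⟩
      left_inv := fun x => Subtype.ext (inv_smul_smul₀ hc.ne' x.1)
      right_inv := fun x => Subtype.ext (smul_inv_smul₀ hc.ne' x.1) }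
  rw [zetaL, zetaL, ← e.tsum_eq, ← tsum_mul_left]
  congr 1
  ext x
  show ‖c • (x : R2)‖ ^ (-s) = c ^ (-s) * ‖(x : R2)‖ ^ (-s)
  rw [norm_smul, Real.norm_eq_abs, abs_of_pos hc,
    Real.mul_rpow hc.le (norm_nonneg _)]

lemma key_ineq {L₀ : Set R2}
    (hmin : ∀ L : Set R2, IsBravais L →
      zetaL L₀ 12 - 2 * zetaL L₀ 6 ≤ zetaL L 12 - 2 * zetaL L 6)
    (L : Set R2) (hL : IsBravais L) {σ : ℝ} (hσ : 0 < σ) :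
    zetaL L₀ 12 - 2 * zetaL L₀ 6 ≤ σ^2 * zetaL L 12 - 2 * σ * zetaL L 6 := by
  set c : ℝ := σ ^ (-(1/6) : ℝ) with hcdef
  have hc : 0 < c := Real.rpow_pos_of_pos hσ _
  have h12 : c ^ (-(12:ℝ)) = σ ^ 2 := by
    rw [hcdef, ← Real.rpow_mul hσ.le]
    norm_num
  have h6 : c ^ (-(6:ℝ)) = σ := by
    rw [hcdef, ← Real.rpow_mul hσ.le]
    norm_num
  have := hmin (c • L) (isBravais_smul hc hL)
  rw [zetaL_smul L hc 12, zetaL_smul L hc 6, h12, h6] at this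
  linarith

/-- If `L₀` is a global minimizer of `E_LJ(L) = ζ_L(12) − 2ζ_L(6)` among Bravais lattices,
then `ζ_{L₀}(12) ≤ ζ_{L₀}(6)` and `ζ_{L₀}(6)` is the maximum of `ζ_L(6)` over all Bravais
lattices `L` with `ζ_L(12) ≤ ζ_L(6)`. -/
theorem global_minimizer_zeta_max (L₀ : Set R2) (h₀ : IsBravais L₀)
    (hmin : ∀ L : Set R2, IsBravais L →
      zetaL L₀ 12 - 2 * zetaL L₀ 6 ≤ zetaL L 12 - 2 * zetaL L 6) :
    zetaL L₀ 12 ≤ zetaL L₀ 6 ∧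
    ∀ L : Set R2, IsBravais L → zetaL L 12 ≤ zetaL L 6 → zetaL L 6 ≤ zetaL L₀ 6 := by
  set A := zetaL L₀ 12 with hAdef
  set B := zetaL L₀ 6 with hBdef
  have hA : 0 ≤ A := zetaL_nonneg _ _
  have hB : 0 ≤ B := zetaL_nonneg _ _
  have hself : ∀ σ : ℝ, 0 < σ → A - 2*B ≤ σ^2*A - 2*σ*B := by
    intro σ hσ
    have := key_ineq hmin L₀ h₀ hσ
    linarith
  have hAB : A = B := by
    rcases eq_or_lt_of_le hA with h | h
    · -- A = 0
      have h2 := hself 2 (by norm_num)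
      have hB0 : B = 0 := by nlinarith
      linarith
    · have hBpos : 0 < B := by
        by_contra h'
        push_neg at h'
        have hB0 : B = 0 := le_antisymm h' hB
        have := hself (1/2) (by norm_num)
        nlinarith
      have h3 := hself (B/A) (div_pos hBpos h)
      have h4 : (A - 2*B) * A ≤ ((B/A)^2*A - 2*(B/A)*B) * A :=
        mul_le_mul_of_nonneg_right h3 h.le
      have h5 : ((B/A)^2*A - 2*(B/A)*B) * A = -B^2 := by
        field_simp
        ring
      rw [h5] at h4
      have h6 : (A - B)^2 ≤ 0 := by nlinarith
      have h7 : (A - B)^2 = 0 := le_antisymm h6 (sq_nonneg _)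
      have := pow_eq_zero_iff (n := 2) (by norm_num) |>.mp h7
      linarith
  refine ⟨hAB.le, ?_⟩
  intro L hL hab
  set a := zetaL L 12 with hadef
  set b := zetaL L 6 with hbdef
  have ha : 0 ≤ a := zetaL_nonneg _ _
  have hb : 0 ≤ b := zetaL_nonneg _ _
  have hkey : ∀ σ : ℝ, 0 < σ → -B ≤ σ^2*a - 2*σ*b := by
    intro σ hσ
    have := key_ineq hmin L hL hσ
    rw [← hadef, ← hbdef, ← hAdef, ← hBdef] at this
    linarith [hAB]
  rcases eq_or_lt_of_le ha with h | h
  · -- a = 0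
    by_contra h'
    push_neg at h'
    have hbpos : 0 < b := lt_of_le_of_lt hB h'
    have hσ : 0 < (B+1)/(2*b) := by positivity
    have := hkey _ hσ
    have he : ((B+1)/(2*b))^2*a - 2*((B+1)/(2*b))*b = -(B+1) := by
      rw [← h]
      field_simp
      ring
    rw [he] at this
    linarith
  · have hσ : 0 < b/a := div_pos (lt_of_lt_of_le h hab) h
    have h3 := hkey _ hσ
    have h4 : (-B) * a ≤ ((b/a)^2*a - 2*(b/a)*b) * a :=
      mul_le_mul_of_nonneg_right h3 h.le
    have h5 : ((b/a)^2*a - 2*(b/a)*b) * a = -b^2 := by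
      field_simp
      ring
    rw [h5] at h4
    nlinarith
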